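/- arXiv:2406.08032 — 2 statements merged into one kernel-verified Lean document; each statement's English description precedes it below -/
import Mathlib

section
/- There exists a constant C > 0 such that for every x = (x₁,x₂,a) ∈ G with r(x) ≥ 1 one has |a ∂_{x₁} k₀(x)| ≤ C ( |x₁|/(r(x) sinh³ r(x)) + a⁻¹ |x₁|/(r(x)² sinh² r(x)) ). -/
open Real MeasureTheory Set

noncomputable section

/-- `cosh` of the hyperbolic distance from `p = (x₁, x₂, a)` to the identity `e = (0,0,1)`. -/
def chD (p : ℝ × ℝ × ℝ) : ℝ :=
  (p.2.2 + (p.2.2)⁻¹ + (p.2.2)⁻¹ * (p.1 ^ 2 + p.2.1 ^ 2)) / 2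

/-- The hyperbolic distance `r(p)` from `p` to the identity, i.e. `arcosh (chD p)`. -/
def rD (p : ℝ × ℝ × ℝ) : ℝ := Real.log (chD p + Real.sqrt (chD p ^ 2 - 1))

/-- `|x| = √(x₁² + x₂²)`. -/
def nm (p : ℝ × ℝ × ℝ) : ℝ := Real.sqrt (p.1 ^ 2 + p.2.1 ^ 2)

/-- The kernel `k₁`. -/
def k1 (p : ℝ × ℝ × ℝ) : ℝ :=
  -(2 * Real.pi ^ 2)⁻¹ * (p.2.2)⁻¹ * p.1 *
    (Real.sinh (rD p) + rD p * Real.cosh (rD p)) / (rD p ^ 2 * Real.sinh (rD p) ^ 3)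

/-- The kernel `k₂`. -/
def k2 (p : ℝ × ℝ × ℝ) : ℝ :=
  -(2 * Real.pi ^ 2)⁻¹ * (p.2.2)⁻¹ * p.2.1 *
    (Real.sinh (rD p) + rD p * Real.cosh (rD p)) / (rD p ^ 2 * Real.sinh (rD p) ^ 3)

/-- The kernel `k₀`. -/
def k0 (p : ℝ × ℝ × ℝ) : ℝ :=
  (2 * Real.pi ^ 2)⁻¹ *
    (-(Real.sinh (rD p) + rD p * Real.cosh (rD p)) +
      (p.2.2)⁻¹ * (Real.cosh (rD p) * Real.sinh (rD p) + rD p)) /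
    (rD p ^ 2 * Real.sinh (rD p) ^ 3)

/-- `y⁻¹ · x` in the group `G = ℝ² ⋊ ℝ⁺`. -/
def ginvMul (y x : ℝ × ℝ × ℝ) : ℝ × ℝ × ℝ :=
  ((y.2.2)⁻¹ * (x.1 - y.1), (y.2.2)⁻¹ * (x.2.1 - y.2.1), x.2.2 / y.2.2)

/-- The right Haar measure `ρ`, of density `a⁻¹` w.r.t. Lebesgue measure on `{a > 0}`. -/
def ρG : Measure (ℝ × ℝ × ℝ) :=
  (volume.restrict {p : ℝ × ℝ × ℝ | 0 < p.2.2}).withDensity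
    (fun p => ENNReal.ofReal (p.2.2)⁻¹)

/-- The left Haar measure `λ`, of density `a⁻³` w.r.t. Lebesgue measure on `{a > 0}`. -/
def lG : Measure (ℝ × ℝ × ℝ) :=
  (volume.restrict {p : ℝ × ℝ × ℝ | 0 < p.2.2}).withDensity
    (fun p => ENNReal.ofReal ((p.2.2) ^ 3)⁻¹)

/-- The set `P₀ = [−1,1] × [−1,1] × [e⁻¹, e]`. -/
def P0 : Set (ℝ × ℝ × ℝ) :=
  {p | p.1 ∈ Icc (-1 : ℝ) 1 ∧ p.2.1 ∈ Icc (-1 : ℝ) 1 ∧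
       p.2.2 ∈ Icc (Real.exp (-1)) (Real.exp 1)}

/-- The set `2P₀ = [−2,2] × [−2,2] × [e⁻², e²]`. -/
def twoP0 : Set (ℝ × ℝ × ℝ) :=
  {p | p.1 ∈ Icc (-2 : ℝ) 2 ∧ p.2.1 ∈ Icc (-2 : ℝ) 2 ∧
       p.2.2 ∈ Icc (Real.exp (-2)) (Real.exp 2)}

/-- The set `P_L = [L−1,L+1] × [−1,1] × [e⁻¹, e]`. -/
def PL (L : ℝ) : Set (ℝ × ℝ × ℝ) :=
  {p | p.1 ∈ Icc (L - 1) (L + 1) ∧ p.2.1 ∈ Icc (-1 : ℝ) 1 ∧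
       p.2.2 ∈ Icc (Real.exp (-1)) (Real.exp 1)}

/-- The set `2P_L = [L−2,L+2] × [−2,2] × [e⁻², e²]`. -/
def twoPL (L : ℝ) : Set (ℝ × ℝ × ℝ) :=
  {p | p.1 ∈ Icc (L - 2) (L + 2) ∧ p.2.1 ∈ Icc (-2 : ℝ) 2 ∧
       p.2.2 ∈ Icc (Real.exp (-2)) (Real.exp 2)}


set_option maxHeartbeats 1000000 in
lemma bound_aux (a b r s c x₁ : ℝ) (hab : a * b = 1) (hb0 : 0 ≤ b)
    (hr : 1 ≤ r) (hs1 : 1 ≤ s) (hrs : r ≤ s) (hc1 : 1 ≤ c) (hc2s : c ≤ 2 * s) :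
    |a * (((2 * Real.pi ^ 2)⁻¹ * (-(c + (1 * c + r * s)) + b * (s * s + c * c + 1)) *
        (r ^ 2 * s ^ 3) -
      (2 * Real.pi ^ 2)⁻¹ * (-(s + r * c) + b * (c * s + r)) *
        (2 * r ^ 1 * s ^ 3 + r ^ 2 * (3 * s ^ 2 * c))) / (r ^ 2 * s ^ 3) ^ 2 *
      (b * x₁ / s))| ≤
    32 * (|x₁| / (r * s ^ 3) + b * |x₁| / (r ^ 2 * s ^ 2)) := by
  have hr0 : (0:ℝ) < r := lt_of_lt_of_le one_pos hr
  have hs0 : (0:ℝ) < s := lt_of_lt_of_le one_pos hs1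
  set A := (2 * Real.pi ^ 2)⁻¹ * (-(c + (1 * c + r * s)) + b * (s * s + c * c + 1)) with hAdef
  set N := (2 * Real.pi ^ 2)⁻¹ * (-(s + r * c) + b * (c * s + r)) with hNdef
  set Dp := 2 * r ^ 1 * s ^ 3 + r ^ 2 * (3 * s ^ 2 * c) with hDpdef
  clear_value A N Dp
  have hπabs : |((2 * Real.pi ^ 2)⁻¹ : ℝ)| ≤ 1 := by
    rw [abs_of_nonneg (by positivity)]
    rw [inv_le_one_iff₀]
    right
    nlinarith [Real.pi_gt_three]
  have hA : |A| ≤ 5 * (r * s) + 8 * (b * s ^ 2) := by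
    rw [hAdef, abs_mul]
    have h2 : |(-(c + (1 * c + r * s)) + b * (s * s + c * c + 1))| ≤
        5 * (r * s) + 8 * (b * s ^ 2) := by
      have hq1 : s * s + c * c + 1 ≤ 8 * s ^ 2 := by nlinarith
      have hq2 : b * (s * s + c * c + 1) ≤ b * (8 * s ^ 2) :=
        mul_le_mul_of_nonneg_left hq1 hb0
      have hq3 : 0 ≤ b * (s * s + c * c + 1) := by positivity
      rw [abs_le]
      constructor <;> nlinarith [mul_pos hr0 hs0, mul_nonneg (sub_nonneg.mpr hr) hs0.le]
    calc |(2 * Real.pi ^ 2)⁻¹| * |(-(c + (1 * c + r * s)) + b * (s * s + c * c + 1))|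
        ≤ 1 * (5 * (r * s) + 8 * (b * s ^ 2)) :=
          mul_le_mul hπabs h2 (abs_nonneg _) zero_le_one
      _ = 5 * (r * s) + 8 * (b * s ^ 2) := one_mul _
  have hNb : |N| ≤ 3 * (r * s) + 3 * (b * s ^ 2) := by
    rw [hNdef, abs_mul]
    have h2 : |(-(s + r * c) + b * (c * s + r))| ≤ 3 * (r * s) + 3 * (b * s ^ 2) := by
      have hq1 : c * s + r ≤ 3 * s ^ 2 := by nlinarith
      have hq2 : b * (c * s + r) ≤ b * (3 * s ^ 2) := mul_le_mul_of_nonneg_left hq1 hb0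
      have hq3 : 0 ≤ b * (c * s + r) := by positivity
      rw [abs_le]
      constructor <;> nlinarith [mul_nonneg (sub_nonneg.mpr hr) hs0.le]
    calc |(2 * Real.pi ^ 2)⁻¹| * |(-(s + r * c) + b * (c * s + r))|
        ≤ 1 * (3 * (r * s) + 3 * (b * s ^ 2)) :=
          mul_le_mul hπabs h2 (abs_nonneg _) zero_le_one
      _ = 3 * (r * s) + 3 * (b * s ^ 2) := one_mul _
  have hDp0 : 0 ≤ Dp := by rw [hDpdef]; positivity
  have hDple : Dp ≤ 8 * (r ^ 2 * s ^ 3) := by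
    rw [hDpdef]
    have h1 : 0 ≤ (r - 1) * (r * s ^ 3) :=
      mul_nonneg (sub_nonneg.mpr hr) (by positivity)
    have h2 : 0 ≤ r ^ 2 * s ^ 2 * (2 * s - c) :=
      mul_nonneg (by positivity) (sub_nonneg.mpr hc2s)
    nlinarith [h1, h2]
  have hnum : |A * (r ^ 2 * s ^ 3) - N * Dp| ≤
      (5 * (r * s) + 8 * (b * s ^ 2)) * (r ^ 2 * s ^ 3) +
      (3 * (r * s) + 3 * (b * s ^ 2)) * (8 * (r ^ 2 * s ^ 3)) := by
    calc |A * (r ^ 2 * s ^ 3) - N * Dp| ≤ |A * (r ^ 2 * s ^ 3)| + |N * Dp| := abs_sub _ _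
      _ = |A| * (r ^ 2 * s ^ 3) + |N| * Dp := by
          simp only [abs_mul, abs_pow, abs_of_pos hr0, abs_of_pos hs0,
            abs_of_nonneg hDp0]

      _ ≤ _ := add_le_add
          (mul_le_mul_of_nonneg_right hA (by positivity))
          (mul_le_mul hNb hDple hDp0 (by positivity))
  have hFb : |(A * (r ^ 2 * s ^ 3) - N * Dp) / (r ^ 2 * s ^ 3) ^ 2| ≤
      29 / (r * s ^ 2) + 32 * b / (r ^ 2 * s) := by
    rw [abs_div, abs_of_pos (by positivity : (0:ℝ) < (r ^ 2 * s ^ 3) ^ 2),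
      div_le_iff₀ (by positivity : (0:ℝ) < (r ^ 2 * s ^ 3) ^ 2)]
    calc |A * (r ^ 2 * s ^ 3) - N * Dp| ≤
        (5 * (r * s) + 8 * (b * s ^ 2)) * (r ^ 2 * s ^ 3) +
        (3 * (r * s) + 3 * (b * s ^ 2)) * (8 * (r ^ 2 * s ^ 3)) := hnum
      _ = (29 / (r * s ^ 2) + 32 * b / (r ^ 2 * s)) * (r ^ 2 * s ^ 3) ^ 2 := by
          field_simp
          ring
  have hax : a * ((A * (r ^ 2 * s ^ 3) - N * Dp) / (r ^ 2 * s ^ 3) ^ 2 * (b * x₁ / s)) =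
      (A * (r ^ 2 * s ^ 3) - N * Dp) / (r ^ 2 * s ^ 3) ^ 2 * x₁ / s := by
    field_simp
    linear_combination (A * (r ^ 2 * s ^ 3) - N * Dp) * x₁ * hab
  calc |a * ((A * (r ^ 2 * s ^ 3) - N * Dp) / (r ^ 2 * s ^ 3) ^ 2 * (b * x₁ / s))|
      = |(A * (r ^ 2 * s ^ 3) - N * Dp) / (r ^ 2 * s ^ 3) ^ 2| * |x₁| / s := by
        rw [hax, abs_div, abs_mul, abs_of_pos hs0]
    _ ≤ (29 / (r * s ^ 2) + 32 * b / (r ^ 2 * s)) * |x₁| / s := by gcongr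
    _ = 29 * (|x₁| / (r * s ^ 3)) + 32 * (b * |x₁| / (r ^ 2 * s ^ 2)) := by
        field_simp
    _ ≤ 32 * (|x₁| / (r * s ^ 3) + b * |x₁| / (r ^ 2 * s ^ 2)) := by
        have t1 : 0 ≤ |x₁| / (r * s ^ 3) := by positivity
        linarith


lemma chD_ge_one' (x₁ x₂ a : ℝ) (ha : 0 < a) : 1 ≤ chD (x₁, x₂, a) := by
  have h2 : a * a⁻¹ = 1 := mul_inv_cancel₀ ha.ne'
  have h3 : 0 ≤ a⁻¹ * (x₁ ^ 2 + x₂ ^ 2) := by positivity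
  simp only [chD]
  nlinarith [sq_nonneg (a - 1)]

lemma cosh_rD' (p : ℝ × ℝ × ℝ) (h : 1 ≤ chD p) : Real.cosh (rD p) = chD p := by
  set c := chD p
  set S := Real.sqrt (c ^ 2 - 1) with hS
  have hS0 : 0 ≤ S := Real.sqrt_nonneg _
  have hS2 : S ^ 2 = c ^ 2 - 1 := Real.sq_sqrt (by nlinarith)
  have hu : 0 < c + S := by linarith
  have hinv : (c + S)⁻¹ = c - S := inv_eq_of_mul_eq_one_right (by nlinarith)
  rw [rD, Real.cosh_log hu, hinv]; ring

lemma sinh_rD' (p : ℝ × ℝ × ℝ) (h : 1 ≤ chD p) :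
    Real.sinh (rD p) = Real.sqrt (chD p ^ 2 - 1) := by
  set c := chD p
  set S := Real.sqrt (c ^ 2 - 1) with hS
  have hS0 : 0 ≤ S := Real.sqrt_nonneg _
  have hS2 : S ^ 2 = c ^ 2 - 1 := Real.sq_sqrt (by nlinarith)
  have hu : 0 < c + S := by linarith
  have hinv : (c + S)⁻¹ = c - S := inv_eq_of_mul_eq_one_right (by nlinarith)
  rw [rD, Real.sinh_log hu, hinv]; ring

lemma hasDerivAt_rD' (x₁ x₂ a : ℝ) (ha : 0 < a) (hgt : 1 < chD (x₁, x₂, a)) :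
    HasDerivAt (fun t => rD (t, x₂, a))
      (a⁻¹ * x₁ / Real.sinh (rD (x₁, x₂, a))) x₁ := by
  set ch := chD (x₁, x₂, a) with hch
  set S := Real.sqrt (ch ^ 2 - 1) with hS
  have hS2 : S ^ 2 = ch ^ 2 - 1 := Real.sq_sqrt (by nlinarith)
  have hS0 : 0 < S := Real.sqrt_pos.mpr (by nlinarith)
  have hsinh : Real.sinh (rD (x₁, x₂, a)) = S := sinh_rD' _ hgt.le
  have hchd : HasDerivAt (fun t => chD (t, x₂, a)) (a⁻¹ * x₁) x₁ := by
    have h1 : HasDerivAt (fun t : ℝ => t ^ 2) (2 * x₁) x₁ := by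
      simpa using hasDerivAt_pow 2 x₁
    have h2 := (((h1.add_const (x₂ ^ 2)).const_mul a⁻¹).const_add (a + a⁻¹)).div_const 2
    have h3 : a⁻¹ * (2 * x₁) / 2 = a⁻¹ * x₁ := by ring
    rw [h3] at h2
    exact h2
  have hne : ch ^ 2 - 1 ≠ 0 := by nlinarith
  have hsq : HasDerivAt (fun t => Real.sqrt (chD (t, x₂, a) ^ 2 - 1))
      (1 / (2 * S) * (2 * ch ^ 1 * (a⁻¹ * x₁))) x₁ :=
    (Real.hasDerivAt_sqrt hne).comp x₁ ((hchd.pow 2).sub_const 1)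
  have hu0 : (0:ℝ) < ch + S := by linarith
  have hlog := (Real.hasDerivAt_log hu0.ne').comp x₁ (hchd.add hsq)
  rw [hsinh]
  refine hlog.congr_deriv ?_
  field_simp
  ring_nf

/-- the estimate for `|a ∂_{x₁} k₀(x)|` when `r(x) ≥ 1`. -/
theorem stmt3 :
    ∃ C : ℝ, 0 < C ∧ ∀ x₁ x₂ a : ℝ, 0 < a → 1 ≤ rD (x₁, x₂, a) →
      |a * deriv (fun t => k0 (t, x₂, a)) x₁| ≤
        C * (|x₁| / (rD (x₁, x₂, a) * Real.sinh (rD (x₁, x₂, a)) ^ 3) +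
          a⁻¹ * |x₁| / (rD (x₁, x₂, a) ^ 2 * Real.sinh (rD (x₁, x₂, a)) ^ 2)) := by
  refine ⟨32, by norm_num, ?_⟩
  intro x₁ x₂ a ha hr
  set r := rD (x₁, x₂, a) with hrdef
  set s := Real.sinh r with hsdef
  set c := Real.cosh r with hcdef
  have hch1 : 1 ≤ chD (x₁, x₂, a) := chD_ge_one' x₁ x₂ a ha
  have hcosh : c = chD (x₁, x₂, a) := cosh_rD' _ hch1
  have hr0 : 0 < r := lt_of_lt_of_le one_pos hr
  have hrs : r ≤ s := Real.self_le_sinh_iff.mpr hr0.le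
  have hs0 : 0 < s := lt_of_lt_of_le hr0 hrs
  have hs1 : 1 ≤ s := by
    have h1 : Real.sinh 1 ≤ s := Real.sinh_le_sinh.mpr hr
    have he : (2.7182818283 : ℝ) < Real.exp 1 := Real.exp_one_gt_d9
    have hei : Real.exp (-1) < 0.4 := by
      rw [Real.exp_neg]
      rw [inv_lt_iff_one_lt_mul₀ (Real.exp_pos 1)]
      nlinarith
    have hsh : Real.sinh 1 = (Real.exp 1 - Real.exp (-1)) / 2 := Real.sinh_eq 1
    linarith
  have hc1 : 1 ≤ c := Real.one_le_cosh r
  have hc2s : c ≤ 2 * s := by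
    have h := Real.cosh_sub_sinh r
    have h2 : Real.exp (-r) ≤ 1 := Real.exp_le_one_iff.mpr (by linarith)
    rw [← hsdef, ← hcdef] at h
    linarith
  have hcsq : c ^ 2 = s ^ 2 + 1 := Real.cosh_sq r
  have hgt : 1 < chD (x₁, x₂, a) := by rw [← hcosh]; nlinarith
  have hb0 : 0 ≤ a⁻¹ := by positivity
  have hrd : HasDerivAt (fun t => rD (t, x₂, a)) (a⁻¹ * x₁ / s) x₁ :=
    hasDerivAt_rD' x₁ x₂ a ha hgt
  have hf : HasDerivAt (fun u => (2 * Real.pi ^ 2)⁻¹ *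
      (-(Real.sinh u + u * Real.cosh u) + a⁻¹ * (Real.cosh u * Real.sinh u + u)) /
      (u ^ 2 * Real.sinh u ^ 3))
      (((2 * Real.pi ^ 2)⁻¹ * (-(c + (1 * c + r * s)) + a⁻¹ * (s * s + c * c + 1)) *
        (r ^ 2 * s ^ 3) -
        (2 * Real.pi ^ 2)⁻¹ * (-(s + r * c) + a⁻¹ * (c * s + r)) *
        (2 * r ^ 1 * s ^ 3 + r ^ 2 * (3 * s ^ 2 * c))) / (r ^ 2 * s ^ 3) ^ 2) r := by
    have hN : HasDerivAt (fun u => (2 * Real.pi ^ 2)⁻¹ *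
        (-(Real.sinh u + u * Real.cosh u) + a⁻¹ * (Real.cosh u * Real.sinh u + u)))
        ((2 * Real.pi ^ 2)⁻¹ * (-(c + (1 * c + r * s)) + a⁻¹ * (s * s + c * c + 1))) r :=
      ((((Real.hasDerivAt_sinh r).add ((hasDerivAt_id r).mul
        (Real.hasDerivAt_cosh r))).neg.add ((((Real.hasDerivAt_cosh r).mul
        (Real.hasDerivAt_sinh r)).add (hasDerivAt_id r)).const_mul a⁻¹)).const_mul _)
    have hD : HasDerivAt (fun u => u ^ 2 * Real.sinh u ^ 3)
        (2 * r ^ 1 * s ^ 3 + r ^ 2 * (3 * s ^ 2 * c)) r := by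
      have h1 : HasDerivAt (fun u : ℝ => u ^ 2) (2 * r ^ 1) r := by
        simpa using hasDerivAt_pow 2 r
      have h2 : HasDerivAt (fun u : ℝ => Real.sinh u ^ 3)
          (3 * Real.sinh r ^ 2 * Real.cosh r) r := by
        simpa using (Real.hasDerivAt_sinh r).fun_pow 3
      exact h1.mul h2
    exact hN.div hD (by positivity)
  have hk : HasDerivAt (fun t => k0 (t, x₂, a))
      (((2 * Real.pi ^ 2)⁻¹ * (-(c + (1 * c + r * s)) + a⁻¹ * (s * s + c * c + 1)) *
        (r ^ 2 * s ^ 3) -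
        (2 * Real.pi ^ 2)⁻¹ * (-(s + r * c) + a⁻¹ * (c * s + r)) *
        (2 * r ^ 1 * s ^ 3 + r ^ 2 * (3 * s ^ 2 * c))) / (r ^ 2 * s ^ 3) ^ 2 *
        (a⁻¹ * x₁ / s)) x₁ := by have := hf.comp x₁ hrd; exact this
  rw [hk.deriv]
  exact bound_aux a a⁻¹ r s c x₁ (mul_inv_cancel₀ ha.ne') hb0 hr hs1 hrs hc1 hc2s
end
end

section
/- There exists a constant C > 0 such that for every R ≥ 1 one has ∫_{{x ∈ G : r(x) > R}} a⁻¹ / (r(x) sinh² r(x)) dρ(x) ≤ C e^{−R}. -/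
open Real MeasureTheory Set

noncomputable section

/-! ### Auxiliary lemmas for `stmt11` -/

section Stmt11Aux

open scoped ENNReal NNReal

lemma lint_Ioi_rpow {c : ℝ} (hc : 0 < c) {a : ℝ} (ha : a < -1) :
    ∫⁻ t in Ioi c, ENNReal.ofReal (t ^ a) = ENNReal.ofReal (-c ^ (a + 1) / (a + 1)) := by
  have h2 : 0 ≤ᵐ[volume.restrict (Ioi c)] fun t : ℝ => t ^ a := by
    filter_upwards [ae_restrict_mem measurableSet_Ioi] with t ht
    exact Real.rpow_nonneg (hc.trans ht).le a
  rw [← MeasureTheory.ofReal_integral_eq_lintegral_ofReal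
      (integrableOn_Ioi_rpow_of_lt ha hc) h2,
    integral_Ioi_rpow_of_lt ha hc]

lemma lint_reflect (Y : ℝ) (f : ℝ → ℝ≥0∞) (hf : ∀ t, f (-t) = f t) :
    ∫⁻ t in Iio (-Y), f t = ∫⁻ t in Ioi Y, f t := by
  have hmp : MeasurePreserving (fun t : ℝ => -t) volume volume :=
    Measure.measurePreserving_neg _
  have hemb : MeasurableEmbedding (fun t : ℝ => -t) :=
    (MeasurableEquiv.neg ℝ).measurableEmbedding
  have hpre : (fun t : ℝ => -t) ⁻¹' (Iio (-Y)) = Ioi Y := by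
    ext t; simp
  calc ∫⁻ t in Iio (-Y), f t
      = ∫⁻ t in (fun t : ℝ => -t) ⁻¹' (Iio (-Y)), f (-t) := by
        rw [hmp.setLIntegral_comp_preimage_emb hemb f _]
    _ = ∫⁻ t in Ioi Y, f t := by rw [hpre]; simp only [hf]

lemma split_sets {s Y : ℝ} :
    {t : ℝ | s ≤ t ^ 2} ⊆ ({t : ℝ | s ≤ t ^ 2} ∩ Icc (-Y) Y) ∪ (Iio (-Y) ∪ Ioi Y) := by
  intro t ht
  by_cases h : t ∈ Icc (-Y) Y
  · exact Or.inl ⟨ht, h⟩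
  · simp only [mem_Icc, not_and_or, not_le] at h
    rcases h with h | h
    · exact Or.inr (Or.inl h)
    · exact Or.inr (Or.inr h)

lemma tail2 {q s : ℝ} (hq : 0 < q) (hs : 0 ≤ s) :
    ∫⁻ t in {t : ℝ | s ≤ t ^ 2}, ENNReal.ofReal (((q + t ^ 2) ^ 2)⁻¹)
      ≤ ENNReal.ofReal (3 * ((q + s) * Real.sqrt (q + s))⁻¹) := by
  have hqs : 0 < q + s := by linarith
  set Y := Real.sqrt (q + s) with hYdef
  have hY0 : 0 < Y := Real.sqrt_pos.2 hqs
  have hY2 : Y ^ 2 = q + s := Real.sq_sqrt hqs.le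
  refine le_trans (lintegral_mono_set (split_sets (Y := Y))) (le_trans (le_trans
    (lintegral_union_le _ _ _) (add_le_add le_rfl (lintegral_union_le _ _ _))) ?_)
  have hpiece1 : ∫⁻ t in {t : ℝ | s ≤ t ^ 2} ∩ Icc (-Y) Y,
      ENNReal.ofReal (((q + t ^ 2) ^ 2)⁻¹)
      ≤ ENNReal.ofReal (((q + s) ^ 2)⁻¹ * (2 * Y)) := by
    have hb : ∀ t ∈ {t : ℝ | s ≤ t ^ 2} ∩ Icc (-Y) Y,
        ENNReal.ofReal (((q + t ^ 2) ^ 2)⁻¹) ≤ ENNReal.ofReal (((q + s) ^ 2)⁻¹) := by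
      rintro t ⟨ht, -⟩
      have ht' : s ≤ t ^ 2 := ht
      apply ENNReal.ofReal_le_ofReal
      have h1 : (q + s) ^ 2 ≤ (q + t ^ 2) ^ 2 := by nlinarith
      exact inv_anti₀ (by positivity) h1
    calc ∫⁻ t in {t : ℝ | s ≤ t ^ 2} ∩ Icc (-Y) Y, ENNReal.ofReal (((q + t ^ 2) ^ 2)⁻¹)
        ≤ ∫⁻ _ in {t : ℝ | s ≤ t ^ 2} ∩ Icc (-Y) Y, ENNReal.ofReal (((q + s) ^ 2)⁻¹) :=
          setLIntegral_mono measurable_const hb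
      _ = ENNReal.ofReal (((q + s) ^ 2)⁻¹) * volume ({t : ℝ | s ≤ t ^ 2} ∩ Icc (-Y) Y) :=
          setLIntegral_const _ _
      _ ≤ ENNReal.ofReal (((q + s) ^ 2)⁻¹) * volume (Icc (-Y) Y) := by
          gcongr
          exact inter_subset_right
      _ = ENNReal.ofReal (((q + s) ^ 2)⁻¹ * (2 * Y)) := by
          rw [Real.volume_Icc, ← ENNReal.ofReal_mul (by positivity)]
          congr 1; ring
  have htail : ∫⁻ t in Ioi Y, ENNReal.ofReal (((q + t ^ 2) ^ 2)⁻¹)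
      ≤ ENNReal.ofReal (((q + s) * Y)⁻¹ / 3) := by
    have hb : ∀ᵐ t ∂(volume.restrict (Ioi Y)),
        ENNReal.ofReal (((q + t ^ 2) ^ 2)⁻¹) ≤ ENNReal.ofReal (t ^ (-4 : ℝ)) := by
      filter_upwards [ae_restrict_mem measurableSet_Ioi] with t ht
      apply ENNReal.ofReal_le_ofReal
      have ht0 : 0 < t := hY0.trans ht
      rw [Real.rpow_neg ht0.le, show (4:ℝ) = ((4:ℕ):ℝ) by norm_num, Real.rpow_natCast]
      apply inv_anti₀ (by positivity)
      nlinarith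
    calc ∫⁻ t in Ioi Y, ENNReal.ofReal (((q + t ^ 2) ^ 2)⁻¹)
        ≤ ∫⁻ t in Ioi Y, ENNReal.ofReal (t ^ (-4 : ℝ)) := lintegral_mono_ae hb
      _ = ENNReal.ofReal (-Y ^ ((-4 : ℝ) + 1) / ((-4 : ℝ) + 1)) :=
          lint_Ioi_rpow hY0 (by norm_num)
      _ = ENNReal.ofReal (((q + s) * Y)⁻¹ / 3) := by
          congr 1
          rw [show (-4 : ℝ) + 1 = -3 by norm_num, Real.rpow_neg hY0.le,
            show (3:ℝ) = ((3:ℕ):ℝ) by norm_num, Real.rpow_natCast]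
          rw [div_eq_div_iff (by norm_num) (by norm_num)]
          have : (q + s) * Y = Y ^ 3 := by rw [← hY2]; ring
          rw [this]; ring
  have htail' : ∫⁻ t in Iio (-Y), ENNReal.ofReal (((q + t ^ 2) ^ 2)⁻¹)
      ≤ ENNReal.ofReal (((q + s) * Y)⁻¹ / 3) := by
    rw [lint_reflect Y _ (fun t => by norm_num)]
    exact htail
  refine le_trans (add_le_add hpiece1 (add_le_add htail' htail)) ?_
  rw [← ENNReal.ofReal_add (by positivity) (by positivity),
      ← ENNReal.ofReal_add (by positivity) (by positivity)]
  apply ENNReal.ofReal_le_ofReal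
  have key : ((q + s) ^ 2)⁻¹ * (2 * Y) = 2 * ((q + s) * Y)⁻¹ := by
    rw [eq_comm, mul_inv, ← hY2]
    field_simp
  rw [key]
  have hpos : 0 ≤ ((q + s) * Y)⁻¹ := by positivity
  linarith

lemma tail32 {q s : ℝ} (hq : 0 < q) (hs : 0 ≤ s) :
    ∫⁻ t in {t : ℝ | s ≤ t ^ 2}, ENNReal.ofReal (((q + t ^ 2) * Real.sqrt (q + t ^ 2))⁻¹)
      ≤ ENNReal.ofReal (3 * (q + s)⁻¹) := by
  have hqs : 0 < q + s := by linarith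
  set Y := Real.sqrt (q + s) with hYdef
  have hY0 : 0 < Y := Real.sqrt_pos.2 hqs
  have hY2 : Y ^ 2 = q + s := Real.sq_sqrt hqs.le
  refine le_trans (lintegral_mono_set (split_sets (Y := Y))) (le_trans (le_trans
    (lintegral_union_le _ _ _) (add_le_add le_rfl (lintegral_union_le _ _ _))) ?_)
  have hpiece1 : ∫⁻ t in {t : ℝ | s ≤ t ^ 2} ∩ Icc (-Y) Y,
      ENNReal.ofReal (((q + t ^ 2) * Real.sqrt (q + t ^ 2))⁻¹)
      ≤ ENNReal.ofReal (((q + s) * Y)⁻¹ * (2 * Y)) := by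
    have hb : ∀ t ∈ {t : ℝ | s ≤ t ^ 2} ∩ Icc (-Y) Y,
        ENNReal.ofReal (((q + t ^ 2) * Real.sqrt (q + t ^ 2))⁻¹)
          ≤ ENNReal.ofReal (((q + s) * Y)⁻¹) := by
      rintro t ⟨ht, -⟩
      have ht' : s ≤ t ^ 2 := ht
      apply ENNReal.ofReal_le_ofReal
      have h0 : q + s ≤ q + t ^ 2 := by linarith
      have h1 : (q + s) * Y ≤ (q + t ^ 2) * Real.sqrt (q + t ^ 2) := by
        apply mul_le_mul h0 (Real.sqrt_le_sqrt h0) hY0.le (by linarith)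
      exact inv_anti₀ (by positivity) h1
    calc ∫⁻ t in {t : ℝ | s ≤ t ^ 2} ∩ Icc (-Y) Y,
          ENNReal.ofReal (((q + t ^ 2) * Real.sqrt (q + t ^ 2))⁻¹)
        ≤ ∫⁻ _ in {t : ℝ | s ≤ t ^ 2} ∩ Icc (-Y) Y, ENNReal.ofReal (((q + s) * Y)⁻¹) :=
          setLIntegral_mono measurable_const hb
      _ = ENNReal.ofReal (((q + s) * Y)⁻¹) * volume ({t : ℝ | s ≤ t ^ 2} ∩ Icc (-Y) Y) :=
          setLIntegral_const _ _
      _ ≤ ENNReal.ofReal (((q + s) * Y)⁻¹) * volume (Icc (-Y) Y) := by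
          gcongr
          exact inter_subset_right
      _ = ENNReal.ofReal (((q + s) * Y)⁻¹ * (2 * Y)) := by
          rw [Real.volume_Icc, ← ENNReal.ofReal_mul (by positivity)]
          congr 1; ring
  have htail : ∫⁻ t in Ioi Y, ENNReal.ofReal (((q + t ^ 2) * Real.sqrt (q + t ^ 2))⁻¹)
      ≤ ENNReal.ofReal ((q + s)⁻¹ / 2) := by
    have hb : ∀ᵐ t ∂(volume.restrict (Ioi Y)),
        ENNReal.ofReal (((q + t ^ 2) * Real.sqrt (q + t ^ 2))⁻¹)
          ≤ ENNReal.ofReal (t ^ (-3 : ℝ)) := by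
      filter_upwards [ae_restrict_mem measurableSet_Ioi] with t ht
      apply ENNReal.ofReal_le_ofReal
      have ht0 : 0 < t := hY0.trans ht
      rw [Real.rpow_neg ht0.le, show (3:ℝ) = ((3:ℕ):ℝ) by norm_num, Real.rpow_natCast]
      apply inv_anti₀ (by positivity)
      have h1 : t ^ 2 ≤ q + t ^ 2 := by linarith
      have h2 : t = Real.sqrt (t ^ 2) := by
        rw [Real.sqrt_sq ht0.le]
      calc t ^ 3 = t ^ 2 * t := by ring
        _ ≤ (q + t ^ 2) * Real.sqrt (q + t ^ 2) := by
            apply mul_le_mul h1 _ ht0.le (by positivity)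
            rw [h2]
            exact Real.sqrt_le_sqrt (by nlinarith)
    calc ∫⁻ t in Ioi Y, ENNReal.ofReal (((q + t ^ 2) * Real.sqrt (q + t ^ 2))⁻¹)
        ≤ ∫⁻ t in Ioi Y, ENNReal.ofReal (t ^ (-3 : ℝ)) := lintegral_mono_ae hb
      _ = ENNReal.ofReal (-Y ^ ((-3 : ℝ) + 1) / ((-3 : ℝ) + 1)) :=
          lint_Ioi_rpow hY0 (by norm_num)
      _ = ENNReal.ofReal ((q + s)⁻¹ / 2) := by
          congr 1
          rw [show (-3 : ℝ) + 1 = -2 by norm_num, Real.rpow_neg hY0.le,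
            show (2:ℝ) = ((2:ℕ):ℝ) by norm_num, Real.rpow_natCast, hY2]
          rw [div_eq_div_iff (by norm_num) (by norm_num)]
          ring
  have htail' : ∫⁻ t in Iio (-Y), ENNReal.ofReal (((q + t ^ 2) * Real.sqrt (q + t ^ 2))⁻¹)
      ≤ ENNReal.ofReal ((q + s)⁻¹ / 2) := by
    rw [lint_reflect Y _ (fun t => by norm_num)]
    exact htail
  refine le_trans (add_le_add hpiece1 (add_le_add htail' htail)) ?_
  rw [← ENNReal.ofReal_add (by positivity) (by positivity),
      ← ENNReal.ofReal_add (by positivity) (by positivity)]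
  apply ENNReal.ofReal_le_ofReal
  have key : ((q + s) * Y)⁻¹ * (2 * Y) = 2 * (q + s)⁻¹ := by
    rw [mul_inv]
    field_simp
  rw [key]
  have hpos : 0 ≤ (q + s)⁻¹ := by positivity
  linarith

lemma lint_inv_Ioc {l u : ℝ} (hl : 0 < l) (hlu : l ≤ u) :
    ∫⁻ a in Ioc l u, ENNReal.ofReal a⁻¹ = ENNReal.ofReal (Real.log (u / l)) := by
  have hu : 0 < u := hl.trans_le hlu
  have hInt : IntegrableOn (fun a : ℝ => a⁻¹) (Ioc l u) := by
    apply (ContinuousOn.integrableOn_compact isCompact_Icc ?_).mono_set Ioc_subset_Icc_self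
    exact ContinuousOn.inv₀ continuousOn_id (fun x hx => (lt_of_lt_of_le hl hx.1).ne')
  have h2 : 0 ≤ᵐ[volume.restrict (Ioc l u)] fun a : ℝ => a⁻¹ := by
    filter_upwards [ae_restrict_mem measurableSet_Ioc] with t ht
    exact inv_nonneg.2 (hl.trans ht.1).le
  rw [← MeasureTheory.ofReal_integral_eq_lintegral_ofReal hInt h2]
  congr 1
  rw [← intervalIntegral.integral_of_le hlu]
  exact integral_inv_of_pos hl hu

/-- The weight `max R |log a|`. -/
def mR (R a : ℝ) : ℝ := max R |Real.log a|

/-- Lower bound for `b` on the region. -/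
def betaR (R a : ℝ) : ℝ := max 1 (2 * a * Real.cosh R - a ^ 2)

/-- Half of `betaR - 1`. -/
def sR (R a : ℝ) : ℝ := (betaR R a - 1) / 2

lemma mR_pos {R a : ℝ} (hR : 1 ≤ R) : 0 < mR R a := lt_of_lt_of_le (by linarith) (le_max_left _ _)

lemma betaR_one_le (R a : ℝ) : 1 ≤ betaR R a := le_max_left _ _

lemma sR_nonneg (R a : ℝ) : 0 ≤ sR R a := by
  have := betaR_one_le R a
  unfold sR; linarith

lemma betaR_le (R a : ℝ) : 2 * a * Real.cosh R - a ^ 2 ≤ betaR R a := le_max_right _ _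

lemma q0_ge {R a : ℝ} : (a ^ 2 + betaR R a) / 2 ≤ a ^ 2 + 1 + sR R a := by
  unfold sR; nlinarith [sq_nonneg a]

/-- The key 1-dimensional integral in the `a`-variable. -/
lemma aInt {R : ℝ} (hR : 1 ≤ R) :
    ∫⁻ a in Ioi (0:ℝ),
      ENNReal.ofReal ((mR R a * (a ^ 2 + betaR R a))⁻¹)
      ≤ ENNReal.ofReal (4 * Real.exp (-R)) := by
  have hRe : Real.exp (-R) ≤ Real.exp R := Real.exp_le_exp.2 (by linarith)
  have hR0 : (0:ℝ) < R := by linarith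
  have hsub : Ioi (0:ℝ) ⊆ Ioc 0 (Real.exp (-R)) ∪ (Ioc (Real.exp (-R)) (Real.exp R) ∪
      Ioi (Real.exp R)) := by
    intro a ha
    rcases le_or_gt a (Real.exp (-R)) with h1 | h1
    · exact Or.inl ⟨ha, h1⟩
    · rcases le_or_gt a (Real.exp R) with h2 | h2
      · exact Or.inr (Or.inl ⟨h1, h2⟩)
      · exact Or.inr (Or.inr h2)
  refine le_trans (lintegral_mono_set hsub) (le_trans (le_trans
    (lintegral_union_le _ _ _) (add_le_add le_rfl (lintegral_union_le _ _ _))) ?_)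
  have hp1 : ∫⁻ a in Ioc (0:ℝ) (Real.exp (-R)),
      ENNReal.ofReal ((mR R a * (a ^ 2 + betaR R a))⁻¹) ≤ ENNReal.ofReal (Real.exp (-R)) := by
    have hb : ∀ a ∈ Ioc (0:ℝ) (Real.exp (-R)),
        ENNReal.ofReal ((mR R a * (a ^ 2 + betaR R a))⁻¹) ≤ ENNReal.ofReal 1 := by
      intro a ha
      apply ENNReal.ofReal_le_ofReal
      rw [show (1:ℝ) = (1:ℝ)⁻¹ by norm_num]
      apply inv_anti₀ (by norm_num)
      have h1 : 1 ≤ mR R a := le_trans hR (le_max_left _ _)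
      have h2 : 1 ≤ a ^ 2 + betaR R a := by nlinarith [betaR_one_le R a, sq_nonneg a]
      nlinarith
    calc ∫⁻ a in Ioc (0:ℝ) (Real.exp (-R)),
          ENNReal.ofReal ((mR R a * (a ^ 2 + betaR R a))⁻¹)
        ≤ ∫⁻ _ in Ioc (0:ℝ) (Real.exp (-R)), ENNReal.ofReal 1 :=
          setLIntegral_mono measurable_const hb
      _ = ENNReal.ofReal 1 * volume (Ioc (0:ℝ) (Real.exp (-R))) := setLIntegral_const _ _
      _ ≤ ENNReal.ofReal (Real.exp (-R)) := by
          rw [Real.volume_Ioc, ENNReal.ofReal_one, one_mul]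
          exact ENNReal.ofReal_le_ofReal (by simp)
  have hp2 : ∫⁻ a in Ioc (Real.exp (-R)) (Real.exp R),
      ENNReal.ofReal ((mR R a * (a ^ 2 + betaR R a))⁻¹)
      ≤ ENNReal.ofReal (2 * Real.exp (-R)) := by
    have hb : ∀ a ∈ Ioc (Real.exp (-R)) (Real.exp R),
        ENNReal.ofReal ((mR R a * (a ^ 2 + betaR R a))⁻¹)
          ≤ ENNReal.ofReal (Real.exp (-R) / R) * ENNReal.ofReal a⁻¹ := by
      intro a ha
      have ha0 : 0 < a := lt_trans (Real.exp_pos _) ha.1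
      rw [← ENNReal.ofReal_mul (by positivity)]
      apply ENNReal.ofReal_le_ofReal
      have hcosh : Real.exp R ≤ 2 * Real.cosh R := by
        rw [Real.cosh_eq]
        have := (Real.exp_pos (-R)).le
        linarith
      have h2 : a * Real.exp R ≤ a ^ 2 + betaR R a := by
        have := betaR_le R a
        have : 2 * a * Real.cosh R ≤ a ^ 2 + betaR R a := by nlinarith
        nlinarith
      have h3 : R * (a * Real.exp R) ≤ mR R a * (a ^ 2 + betaR R a) := by
        apply mul_le_mul (le_max_left _ _) h2 (by positivity) (mR_pos hR).le
      calc (mR R a * (a ^ 2 + betaR R a))⁻¹ ≤ (R * (a * Real.exp R))⁻¹ :=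
            inv_anti₀ (by positivity) h3
        _ = Real.exp (-R) / R * a⁻¹ := by
            rw [Real.exp_neg]
            field_simp
    calc ∫⁻ a in Ioc (Real.exp (-R)) (Real.exp R),
          ENNReal.ofReal ((mR R a * (a ^ 2 + betaR R a))⁻¹)
        ≤ ∫⁻ a in Ioc (Real.exp (-R)) (Real.exp R),
            ENNReal.ofReal (Real.exp (-R) / R) * ENNReal.ofReal a⁻¹ :=
          setLIntegral_mono (by
            apply Measurable.const_mul
            exact (measurable_inv.ennreal_ofReal)) hb
      _ = ENNReal.ofReal (Real.exp (-R) / R) *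
            ∫⁻ a in Ioc (Real.exp (-R)) (Real.exp R), ENNReal.ofReal a⁻¹ := by
          rw [lintegral_const_mul _ measurable_inv.ennreal_ofReal]
      _ = ENNReal.ofReal (Real.exp (-R) / R) *
            ENNReal.ofReal (Real.log (Real.exp R / Real.exp (-R))) := by
          rw [lint_inv_Ioc (Real.exp_pos _) hRe]
      _ ≤ ENNReal.ofReal (2 * Real.exp (-R)) := by
          rw [← ENNReal.ofReal_mul (by positivity)]
          apply ENNReal.ofReal_le_ofReal
          rw [← Real.exp_sub, Real.log_exp]
          rw [div_mul_eq_mul_div, mul_comm]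
          rw [div_le_iff₀ hR0]
          ring_nf
          nlinarith [Real.exp_pos (-R)]
  have hp3 : ∫⁻ a in Ioi (Real.exp R),
      ENNReal.ofReal ((mR R a * (a ^ 2 + betaR R a))⁻¹) ≤ ENNReal.ofReal (Real.exp (-R)) := by
    have hb : ∀ᵐ a ∂(volume.restrict (Ioi (Real.exp R))),
        ENNReal.ofReal ((mR R a * (a ^ 2 + betaR R a))⁻¹) ≤ ENNReal.ofReal (a ^ (-2 : ℝ)) := by
      filter_upwards [ae_restrict_mem measurableSet_Ioi] with a ha
      have ha0 : 0 < a := lt_trans (Real.exp_pos _) ha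
      apply ENNReal.ofReal_le_ofReal
      rw [Real.rpow_neg ha0.le, show (2:ℝ) = ((2:ℕ):ℝ) by norm_num, Real.rpow_natCast]
      apply inv_anti₀ (by positivity)
      have h1 : 1 ≤ mR R a := le_trans hR (le_max_left _ _)
      nlinarith [betaR_one_le R a]
    calc ∫⁻ a in Ioi (Real.exp R), ENNReal.ofReal ((mR R a * (a ^ 2 + betaR R a))⁻¹)
        ≤ ∫⁻ a in Ioi (Real.exp R), ENNReal.ofReal (a ^ (-2 : ℝ)) := lintegral_mono_ae hb
      _ = ENNReal.ofReal (-(Real.exp R) ^ ((-2 : ℝ) + 1) / ((-2 : ℝ) + 1)) :=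
          lint_Ioi_rpow (Real.exp_pos _) (by norm_num)
      _ ≤ ENNReal.ofReal (Real.exp (-R)) := by
          apply ENNReal.ofReal_le_ofReal
          rw [show (-2 : ℝ) + 1 = -1 by norm_num, Real.rpow_neg_one, Real.exp_neg]
          apply le_of_eq
          ring
  refine le_trans (add_le_add hp1 (add_le_add hp2 hp3)) ?_
  rw [← ENNReal.ofReal_add (by positivity) (by positivity),
      ← ENNReal.ofReal_add (by positivity) (by positivity)]
  apply ENNReal.ofReal_le_ofReal
  linarith

end Stmt11Aux

section Stmt11Aux2

open scoped ENNReal NNReal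

lemma arcosh_facts {c : ℝ} (hc : 1 ≤ c) :
    Real.cosh (Real.log (c + Real.sqrt (c ^ 2 - 1))) = c ∧
    Real.sinh (Real.log (c + Real.sqrt (c ^ 2 - 1))) = Real.sqrt (c ^ 2 - 1) ∧
    0 ≤ Real.log (c + Real.sqrt (c ^ 2 - 1)) := by
  set s := Real.sqrt (c ^ 2 - 1) with hsdef
  have hs0 : 0 ≤ s := Real.sqrt_nonneg _
  have hs2 : s ^ 2 = c ^ 2 - 1 := Real.sq_sqrt (by nlinarith)
  have hcs : 0 < c + s := by nlinarith
  have hexp : Real.exp (Real.log (c + s)) = c + s := Real.exp_log hcs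
  have hmul : (c + s) * (c - s) = 1 := by nlinarith
  have hinv : Real.exp (-Real.log (c + s)) = c - s := by
    rw [Real.exp_neg, hexp]
    exact inv_eq_of_mul_eq_one_right hmul
  refine ⟨?_, ?_, Real.log_nonneg (by nlinarith)⟩
  · rw [Real.cosh_eq, hexp, hinv]; ring
  · rw [Real.sinh_eq, hexp, hinv]; ring

lemma chD_ge_one {p : ℝ × ℝ × ℝ} (hp : 0 < p.2.2) : 1 ≤ chD p := by
  have h1 : chD p = (p.2.2 ^ 2 + (1 + p.1 ^ 2 + p.2.1 ^ 2)) / (2 * p.2.2) := by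
    unfold chD; field_simp; ring
  rw [h1, le_div_iff₀ (by positivity)]
  nlinarith [sq_nonneg (p.2.2 - 1), sq_nonneg p.1, sq_nonneg p.2.1]

lemma chD_eq {p : ℝ × ℝ × ℝ} (hp : 0 < p.2.2) :
    chD p = (p.2.2 ^ 2 + (1 + p.1 ^ 2 + p.2.1 ^ 2)) / (2 * p.2.2) := by
  unfold chD; field_simp; ring

lemma rD_facts {p : ℝ × ℝ × ℝ} (hp : 0 < p.2.2) :
    Real.cosh (rD p) = chD p ∧ Real.sinh (rD p) ^ 2 = chD p ^ 2 - 1 ∧ 0 ≤ rD p ∧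
      |Real.log p.2.2| ≤ rD p := by
  have hc := chD_ge_one hp
  obtain ⟨h1, h2, h3⟩ := arcosh_facts hc
  have hsinh2 : Real.sinh (rD p) ^ 2 = chD p ^ 2 - 1 := by
    show Real.sinh (Real.log (chD p + Real.sqrt (chD p ^ 2 - 1))) ^ 2 = _
    rw [h2]
    exact Real.sq_sqrt (by nlinarith)
  refine ⟨h1, hsinh2, h3, ?_⟩
  have hcoshlog : Real.cosh (Real.log p.2.2) ≤ chD p := by
    rw [Real.cosh_eq, Real.exp_log hp, Real.exp_neg, Real.exp_log hp]
    unfold chD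
    have h4 : 0 ≤ (p.2.2)⁻¹ * (p.1 ^ 2 + p.2.1 ^ 2) := by positivity
    linarith
  have h1' : Real.cosh (rD p) = chD p := h1
  have : Real.cosh (Real.log p.2.2) ≤ Real.cosh (rD p) := by rw [h1']; exact hcoshlog
  have habs := Real.cosh_le_cosh.1 this
  calc |Real.log p.2.2| ≤ |rD p| := habs
    _ = rD p := abs_of_nonneg h3

lemma cosh_one_ge : (1.5 : ℝ) ≤ Real.cosh 1 := by
  have he1 : (2.7182818283 : ℝ) < Real.exp 1 := Real.exp_one_gt_d9
  have he2 : Real.exp 1 < 2.7182818286 := Real.exp_one_lt_d9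
  have hee : Real.exp (-1) * Real.exp 1 = 1 := by
    rw [← Real.exp_add]; norm_num
  have hpos : (0:ℝ) < Real.exp 1 := Real.exp_pos 1
  rw [Real.cosh_eq]
  nlinarith

/-- The key pointwise bound on the region. -/
lemma pointwise_bd {R : ℝ} (hR : 1 ≤ R) {p : ℝ × ℝ × ℝ} (hp : 0 < p.2.2) (hr : R < rD p) :
    ENNReal.ofReal (p.2.2)⁻¹ *
      ENNReal.ofReal ((p.2.2)⁻¹ / (rD p * Real.sinh (rD p) ^ 2))
      ≤ ENNReal.ofReal (8 * (mR R p.2.2 * (p.2.2 ^ 2 + (1 + p.1 ^ 2 + p.2.1 ^ 2)) ^ 2)⁻¹) := by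
  set a := p.2.2 with hadef
  set b := 1 + p.1 ^ 2 + p.2.1 ^ 2 with hbdef
  obtain ⟨hcosh, hsinh2, hr0, hlog⟩ := rD_facts hp
  have hc1 : 1 ≤ chD p := chD_ge_one hp
  have hceq : chD p = (a ^ 2 + b) / (2 * a) := chD_eq hp
  have hb1 : 1 ≤ b := by rw [hbdef]; nlinarith [sq_nonneg p.1, sq_nonneg p.2.1]
  have hcoshR : Real.cosh R < chD p := by
    rw [← hcosh]
    apply Real.cosh_lt_cosh.2
    rw [abs_of_pos (by linarith : (0:ℝ) < R), abs_of_nonneg hr0]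
    exact hr
  have hcosh1R : Real.cosh 1 ≤ Real.cosh R := by
    apply Real.cosh_le_cosh.2
    rw [abs_one, abs_of_pos (by linarith : (0:ℝ) < R)]
    exact hR
  have hc15 : (1.5 : ℝ) ≤ chD p := le_trans (le_trans cosh_one_ge hcosh1R) hcoshR.le
  have hc2 : 2 ≤ chD p ^ 2 := by nlinarith
  have hm_le : mR R a ≤ rD p := max_le hr.le hlog
  have hm_pos : 0 < mR R a := mR_pos hR
  have hrpos : 0 < rD p := lt_of_lt_of_le (by linarith) hr.le
  have hchsq : chD p ^ 2 = (a ^ 2 + b) ^ 2 / (4 * a ^ 2) := by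
    rw [hceq]; field_simp; ring
  have hsinh_lb : (a ^ 2 + b) ^ 2 / (8 * a ^ 2) ≤ Real.sinh (rD p) ^ 2 := by
    rw [hsinh2]
    have h1 : chD p ^ 2 / 2 ≤ chD p ^ 2 - 1 := by linarith
    calc (a ^ 2 + b) ^ 2 / (8 * a ^ 2) = chD p ^ 2 / 2 := by rw [hchsq]; ring
      _ ≤ chD p ^ 2 - 1 := h1
  have hsinh_pos : 0 < Real.sinh (rD p) ^ 2 := by
    rw [hsinh2]; linarith
  have hX : mR R a * (a ^ 2 + b) ^ 2 ≤ 8 * (a ^ 2 * (rD p * Real.sinh (rD p) ^ 2)) := by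
    have hsinh_lb' : (a ^ 2 + b) ^ 2 ≤ 8 * a ^ 2 * Real.sinh (rD p) ^ 2 := by
      rw [div_le_iff₀ (by positivity : (0:ℝ) < 8 * a ^ 2)] at hsinh_lb
      linarith
    have step' : mR R a * (a ^ 2 + b) ^ 2
        ≤ rD p * (8 * a ^ 2 * Real.sinh (rD p) ^ 2) :=
      mul_le_mul hm_le hsinh_lb' (by positivity) hrpos.le
    have hring : rD p * (8 * a ^ 2 * Real.sinh (rD p) ^ 2)
        = 8 * (a ^ 2 * (rD p * Real.sinh (rD p) ^ 2)) := by ring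
    linarith
  rw [← ENNReal.ofReal_mul (by positivity)]
  apply ENNReal.ofReal_le_ofReal
  have hXpos : 0 < mR R a * (a ^ 2 + b) ^ 2 := by positivity
  have heq : a⁻¹ * (a⁻¹ / (rD p * Real.sinh (rD p) ^ 2))
      = (a ^ 2 * (rD p * Real.sinh (rD p) ^ 2))⁻¹ := by
    field_simp
  rw [heq]
  calc (a ^ 2 * (rD p * Real.sinh (rD p) ^ 2))⁻¹
      ≤ (mR R a * (a ^ 2 + b) ^ 2 / 8)⁻¹ := by
        apply inv_anti₀ (by positivity)
        rw [div_le_iff₀ (by norm_num : (0:ℝ) < 8)]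
        linarith
    _ = 8 * (mR R a * (a ^ 2 + b) ^ 2)⁻¹ := by
        rw [inv_div, div_eq_mul_inv]

/-- The majorant. -/
def GG (R : ℝ) (p : ℝ × ℝ × ℝ) : ℝ≥0∞ :=
  ENNReal.ofReal (8 * (mR R p.2.2 * (p.2.2 ^ 2 + (1 + p.1 ^ 2 + p.2.1 ^ 2)) ^ 2)⁻¹)

/-- Region where the `x₁` coordinate is large. -/
def V1 (R : ℝ) : Set (ℝ × ℝ × ℝ) := {p | 0 < p.2.2 ∧ sR R p.2.2 ≤ p.1 ^ 2}

/-- Region where the `x₂` coordinate is large. -/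
def V2 (R : ℝ) : Set (ℝ × ℝ × ℝ) := {p | 0 < p.2.2 ∧ sR R p.2.2 ≤ p.2.1 ^ 2}

lemma meas_a3 : Measurable fun p : ℝ × ℝ × ℝ => p.2.2 := measurable_snd.comp measurable_snd

lemma meas_mR (R : ℝ) : Measurable fun a : ℝ => mR R a :=
  measurable_const.max (Real.measurable_log.abs)

lemma meas_sR (R : ℝ) : Measurable fun a : ℝ => sR R a := by
  unfold sR betaR
  fun_prop

lemma meas_GG (R : ℝ) : Measurable (GG R) := by
  apply Measurable.ennreal_ofReal
  apply Measurable.const_mul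
  apply Measurable.inv
  apply Measurable.mul
  · exact (meas_mR R).comp meas_a3
  · exact ((meas_a3.pow_const 2).add
      ((measurable_const.add (measurable_fst.pow_const 2)).add
        ((measurable_fst.comp measurable_snd).pow_const 2))).pow_const 2

lemma meas_V1 (R : ℝ) : MeasurableSet (V1 R) := by
  have h1 : V1 R = {p : ℝ × ℝ × ℝ | 0 < p.2.2} ∩ {p : ℝ × ℝ × ℝ | sR R p.2.2 ≤ p.1 ^ 2} := rfl
  rw [h1]
  exact (measurableSet_lt measurable_const meas_a3).inter
    (measurableSet_le ((meas_sR R).comp meas_a3) (measurable_fst.pow_const 2))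

lemma meas_V2 (R : ℝ) : MeasurableSet (V2 R) := by
  have h1 : V2 R = {p : ℝ × ℝ × ℝ | 0 < p.2.2} ∩ {p : ℝ × ℝ × ℝ | sR R p.2.2 ≤ p.2.1 ^ 2} := rfl
  rw [h1]
  exact (measurableSet_lt measurable_const meas_a3).inter
    (measurableSet_le ((meas_sR R).comp meas_a3)
      ((measurable_fst.comp measurable_snd).pow_const 2))

lemma final_a_step {R : ℝ} (hR : 1 ≤ R) :
    ∫⁻ a : ℝ, (Ioi (0:ℝ)).indicator
      (fun a => ENNReal.ofReal 144 * ENNReal.ofReal ((mR R a * (a ^ 2 + betaR R a))⁻¹)) a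
      ≤ ENNReal.ofReal (576 * Real.exp (-R)) := by
  rw [lintegral_indicator measurableSet_Ioi]
  rw [lintegral_const_mul _ (by
    apply Measurable.ennreal_ofReal
    apply Measurable.inv
    exact (meas_mR R).mul ((measurable_id.pow_const 2).add (by unfold betaR; fun_prop)))]
  calc ENNReal.ofReal 144 * ∫⁻ a in Ioi (0:ℝ), ENNReal.ofReal ((mR R a * (a ^ 2 + betaR R a))⁻¹)
      ≤ ENNReal.ofReal 144 * ENNReal.ofReal (4 * Real.exp (-R)) := by
        gcongr
        exact aInt hR
    _ = ENNReal.ofReal (576 * Real.exp (-R)) := by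
        rw [← ENNReal.ofReal_mul (by norm_num)]
        congr 1
        ring

lemma inner_combine {R : ℝ} (hR : 1 ≤ R) {a : ℝ} (ha : 0 < a) :
    ENNReal.ofReal (24 * (mR R a)⁻¹) *
      ENNReal.ofReal (3 * (a ^ 2 + 1 + sR R a)⁻¹)
      ≤ ENNReal.ofReal 144 * ENNReal.ofReal ((mR R a * (a ^ 2 + betaR R a))⁻¹) := by
  have hm := mR_pos (R := R) (a := a) hR
  rw [← ENNReal.ofReal_mul (by positivity), ← ENNReal.ofReal_mul (by norm_num)]
  apply ENNReal.ofReal_le_ofReal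
  have hq0 : (a ^ 2 + betaR R a) / 2 ≤ a ^ 2 + 1 + sR R a := q0_ge
  have hXpos : (0:ℝ) < a ^ 2 + betaR R a := by nlinarith [betaR_one_le R a, sq_nonneg a]
  have hq0pos : (0:ℝ) < a ^ 2 + 1 + sR R a := by nlinarith [sR_nonneg R a]
  have hinv : (a ^ 2 + 1 + sR R a)⁻¹ ≤ 2 * (a ^ 2 + betaR R a)⁻¹ := by
    calc (a ^ 2 + 1 + sR R a)⁻¹ ≤ ((a ^ 2 + betaR R a) / 2)⁻¹ :=
          inv_anti₀ (by positivity) hq0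
      _ = 2 * (a ^ 2 + betaR R a)⁻¹ := by rw [inv_div, div_eq_mul_inv]
  rw [mul_inv]
  have h1 : (0:ℝ) ≤ (mR R a)⁻¹ := by positivity
  have h2 : (0:ℝ) ≤ (a ^ 2 + betaR R a)⁻¹ := by positivity
  nlinarith

end Stmt11Aux2

section Stmt11Pieces

open scoped ENNReal NNReal

lemma piece1 {R : ℝ} (hR : 1 ≤ R) :
    ∫⁻ p in V1 R, GG R p ≤ ENNReal.ofReal (576 * Real.exp (-R)) := by
  have hfmeas : Measurable ((V1 R).indicator (GG R)) := (meas_GG R).indicator (meas_V1 R)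
  rw [← lintegral_indicator (meas_V1 R)]
  rw [Measure.volume_eq_prod ℝ (ℝ × ℝ)]
  rw [lintegral_prod_symm _ hfmeas.aemeasurable]
  have hinmeas : Measurable fun y : ℝ × ℝ => ∫⁻ x : ℝ, (V1 R).indicator (GG R) (x, y) :=
    hfmeas.lintegral_prod_left'
  rw [Measure.volume_eq_prod ℝ ℝ, lintegral_prod_symm _ hinmeas.aemeasurable]
  refine le_trans (lintegral_mono fun a => ?_) (final_a_step hR)
  by_cases ha : 0 < a
  · rw [indicator_of_mem (mem_Ioi.2 ha)]
    have hm := mR_pos (R := R) (a := a) hR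
    have hq0pos : (0:ℝ) < a ^ 2 + 1 + sR R a := by nlinarith [sR_nonneg R a, sq_nonneg a]
    have hsetmeas : MeasurableSet {t : ℝ | sR R a ≤ t ^ 2} :=
      measurableSet_le measurable_const (measurable_id.pow_const 2)
    have hstep1 : ∀ x₂ : ℝ, ∫⁻ x₁ : ℝ, (V1 R).indicator (GG R) (x₁, x₂, a)
        ≤ ENNReal.ofReal (24 * (mR R a)⁻¹) *
          ENNReal.ofReal (((a ^ 2 + 1 + sR R a + x₂ ^ 2) *
            Real.sqrt (a ^ 2 + 1 + sR R a + x₂ ^ 2))⁻¹) := by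
      intro x₂
      have hqpos : (0:ℝ) < a ^ 2 + 1 + x₂ ^ 2 := by positivity
      have hind : ∀ x₁ : ℝ, (V1 R).indicator (GG R) (x₁, x₂, a)
          = ({t : ℝ | sR R a ≤ t ^ 2}).indicator (fun t => GG R (t, x₂, a)) x₁ := by
        intro x₁
        by_cases hx : sR R a ≤ x₁ ^ 2
        · rw [indicator_of_mem (show (x₁, x₂, a) ∈ V1 R from ⟨ha, hx⟩),
            indicator_of_mem (show x₁ ∈ {t : ℝ | sR R a ≤ t ^ 2} from hx)]
        · rw [indicator_of_notMem (show (x₁, x₂, a) ∉ V1 R from fun h => hx h.2),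
            indicator_of_notMem (show x₁ ∉ {t : ℝ | sR R a ≤ t ^ 2} from hx)]
      have hGGval : ∀ x₁ : ℝ, GG R (x₁, x₂, a)
          = ENNReal.ofReal (8 * (mR R a)⁻¹) *
            ENNReal.ofReal (((a ^ 2 + 1 + x₂ ^ 2 + x₁ ^ 2) ^ 2)⁻¹) := by
        intro x₁
        have hval : GG R (x₁, x₂, a) = ENNReal.ofReal
            (8 * (mR R a * (a ^ 2 + (1 + x₁ ^ 2 + x₂ ^ 2)) ^ 2)⁻¹) := rfl
        rw [hval, ← ENNReal.ofReal_mul (by positivity)]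
        congr 1
        have harg : a ^ 2 + (1 + x₁ ^ 2 + x₂ ^ 2) = a ^ 2 + 1 + x₂ ^ 2 + x₁ ^ 2 := by ring
        rw [harg, mul_inv]
        ring
      simp only [hind]
      rw [lintegral_indicator hsetmeas]
      simp only [hGGval]
      rw [lintegral_const_mul _ (by
        exact (((measurable_const.add (measurable_id.pow_const 2)).pow_const 2).inv).ennreal_ofReal)]
      calc ENNReal.ofReal (8 * (mR R a)⁻¹) *
            ∫⁻ x₁ in {t : ℝ | sR R a ≤ t ^ 2},
              ENNReal.ofReal (((a ^ 2 + 1 + x₂ ^ 2 + x₁ ^ 2) ^ 2)⁻¹)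
          ≤ ENNReal.ofReal (8 * (mR R a)⁻¹) *
            ENNReal.ofReal (3 * ((a ^ 2 + 1 + x₂ ^ 2 + sR R a) *
              Real.sqrt (a ^ 2 + 1 + x₂ ^ 2 + sR R a))⁻¹) := by
            gcongr
            exact tail2 hqpos (sR_nonneg R a)
        _ = ENNReal.ofReal (24 * (mR R a)⁻¹) *
            ENNReal.ofReal (((a ^ 2 + 1 + sR R a + x₂ ^ 2) *
              Real.sqrt (a ^ 2 + 1 + sR R a + x₂ ^ 2))⁻¹) := by
            have harg2 : a ^ 2 + 1 + x₂ ^ 2 + sR R a = a ^ 2 + 1 + sR R a + x₂ ^ 2 := by ring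
            rw [harg2, ← ENNReal.ofReal_mul (by positivity), ← ENNReal.ofReal_mul (by positivity)]
            congr 1
            ring
    calc ∫⁻ x₂ : ℝ, ∫⁻ x₁ : ℝ, (V1 R).indicator (GG R) (x₁, x₂, a)
        ≤ ∫⁻ x₂ : ℝ, ENNReal.ofReal (24 * (mR R a)⁻¹) *
            ENNReal.ofReal (((a ^ 2 + 1 + sR R a + x₂ ^ 2) *
              Real.sqrt (a ^ 2 + 1 + sR R a + x₂ ^ 2))⁻¹) := lintegral_mono hstep1
      _ = ENNReal.ofReal (24 * (mR R a)⁻¹) *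
            ∫⁻ x₂ : ℝ, ENNReal.ofReal (((a ^ 2 + 1 + sR R a + x₂ ^ 2) *
              Real.sqrt (a ^ 2 + 1 + sR R a + x₂ ^ 2))⁻¹) := by
          rw [lintegral_const_mul _ (by
            have hmeas : Measurable fun t : ℝ => a ^ 2 + 1 + sR R a + t ^ 2 :=
              measurable_const.add (measurable_id.pow_const 2)
            exact ((hmeas.mul (Real.continuous_sqrt.measurable.comp hmeas)).inv).ennreal_ofReal)]
      _ ≤ ENNReal.ofReal (24 * (mR R a)⁻¹) * ENNReal.ofReal (3 * (a ^ 2 + 1 + sR R a + 0)⁻¹) := by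
          gcongr
          have huniv : (univ : Set ℝ) = {t : ℝ | (0:ℝ) ≤ t ^ 2} := by
            ext t; simp [sq_nonneg]
          calc ∫⁻ x₂ : ℝ, ENNReal.ofReal (((a ^ 2 + 1 + sR R a + x₂ ^ 2) *
                Real.sqrt (a ^ 2 + 1 + sR R a + x₂ ^ 2))⁻¹)
              = ∫⁻ x₂ in {t : ℝ | (0:ℝ) ≤ t ^ 2},
                  ENNReal.ofReal (((a ^ 2 + 1 + sR R a + x₂ ^ 2) *
                    Real.sqrt (a ^ 2 + 1 + sR R a + x₂ ^ 2))⁻¹) := by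
                rw [← huniv, Measure.restrict_univ]
            _ ≤ ENNReal.ofReal (3 * (a ^ 2 + 1 + sR R a + 0)⁻¹) := tail32 hq0pos le_rfl
      _ ≤ ENNReal.ofReal 144 * ENNReal.ofReal ((mR R a * (a ^ 2 + betaR R a))⁻¹) := by
          rw [add_zero]
          exact inner_combine hR ha
  · have hz : ∀ x₂ x₁ : ℝ, (V1 R).indicator (GG R) (x₁, x₂, a) = 0 := by
      intro x₂ x₁
      exact indicator_of_notMem (fun h => ha h.1) _
    calc ∫⁻ x₂ : ℝ, ∫⁻ x₁ : ℝ, (V1 R).indicator (GG R) (x₁, x₂, a)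
        = 0 := by simp only [hz, lintegral_zero]
      _ ≤ _ := zero_le

lemma piece2 {R : ℝ} (hR : 1 ≤ R) :
    ∫⁻ p in V2 R, GG R p ≤ ENNReal.ofReal (576 * Real.exp (-R)) := by
  have hfmeas : Measurable ((V2 R).indicator (GG R)) := (meas_GG R).indicator (meas_V2 R)
  rw [← lintegral_indicator (meas_V2 R)]
  rw [Measure.volume_eq_prod ℝ (ℝ × ℝ)]
  rw [lintegral_prod_symm _ hfmeas.aemeasurable]
  have hinmeas : Measurable fun y : ℝ × ℝ => ∫⁻ x : ℝ, (V2 R).indicator (GG R) (x, y) :=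
    hfmeas.lintegral_prod_left'
  rw [Measure.volume_eq_prod ℝ ℝ, lintegral_prod_symm _ hinmeas.aemeasurable]
  refine le_trans (lintegral_mono fun a => ?_) (final_a_step hR)
  by_cases ha : 0 < a
  · rw [indicator_of_mem (mem_Ioi.2 ha)]
    have hm := mR_pos (R := R) (a := a) hR
    have hsetmeas : MeasurableSet {t : ℝ | sR R a ≤ t ^ 2} :=
      measurableSet_le measurable_const (measurable_id.pow_const 2)
    have hstep1 : ∀ x₂ : ℝ, ∫⁻ x₁ : ℝ, (V2 R).indicator (GG R) (x₁, x₂, a)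
        ≤ ({t : ℝ | sR R a ≤ t ^ 2}).indicator (fun t =>
            ENNReal.ofReal (24 * (mR R a)⁻¹) *
            ENNReal.ofReal (((a ^ 2 + 1 + t ^ 2) * Real.sqrt (a ^ 2 + 1 + t ^ 2))⁻¹)) x₂ := by
      intro x₂
      by_cases hx : sR R a ≤ x₂ ^ 2
      · rw [indicator_of_mem (show x₂ ∈ {t : ℝ | sR R a ≤ t ^ 2} from hx)]
        have hqpos : (0:ℝ) < a ^ 2 + 1 + x₂ ^ 2 := by positivity
        have hind : ∀ x₁ : ℝ, (V2 R).indicator (GG R) (x₁, x₂, a) = GG R (x₁, x₂, a) :=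
          fun x₁ => indicator_of_mem (show (x₁, x₂, a) ∈ V2 R from ⟨ha, hx⟩) _
        have hGGval : ∀ x₁ : ℝ, GG R (x₁, x₂, a)
            = ENNReal.ofReal (8 * (mR R a)⁻¹) *
              ENNReal.ofReal (((a ^ 2 + 1 + x₂ ^ 2 + x₁ ^ 2) ^ 2)⁻¹) := by
          intro x₁
          have hval : GG R (x₁, x₂, a) = ENNReal.ofReal
              (8 * (mR R a * (a ^ 2 + (1 + x₁ ^ 2 + x₂ ^ 2)) ^ 2)⁻¹) := rfl
          rw [hval, ← ENNReal.ofReal_mul (by positivity)]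
          congr 1
          have harg : a ^ 2 + (1 + x₁ ^ 2 + x₂ ^ 2) = a ^ 2 + 1 + x₂ ^ 2 + x₁ ^ 2 := by ring
          rw [harg, mul_inv]
          ring
        simp only [hind, hGGval]
        rw [lintegral_const_mul _ (by
          exact (((measurable_const.add (measurable_id.pow_const 2)).pow_const 2).inv).ennreal_ofReal)]
        have huniv : (univ : Set ℝ) = {t : ℝ | (0:ℝ) ≤ t ^ 2} := by
          ext t; simp [sq_nonneg]
        calc ENNReal.ofReal (8 * (mR R a)⁻¹) *
              ∫⁻ x₁ : ℝ, ENNReal.ofReal (((a ^ 2 + 1 + x₂ ^ 2 + x₁ ^ 2) ^ 2)⁻¹)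
            = ENNReal.ofReal (8 * (mR R a)⁻¹) *
              ∫⁻ x₁ in {t : ℝ | (0:ℝ) ≤ t ^ 2},
                ENNReal.ofReal (((a ^ 2 + 1 + x₂ ^ 2 + x₁ ^ 2) ^ 2)⁻¹) := by
              rw [← huniv, Measure.restrict_univ]
          _ ≤ ENNReal.ofReal (8 * (mR R a)⁻¹) *
              ENNReal.ofReal (3 * ((a ^ 2 + 1 + x₂ ^ 2 + 0) *
                Real.sqrt (a ^ 2 + 1 + x₂ ^ 2 + 0))⁻¹) := by
              gcongr
              exact tail2 hqpos le_rfl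
          _ = ENNReal.ofReal (24 * (mR R a)⁻¹) *
              ENNReal.ofReal (((a ^ 2 + 1 + x₂ ^ 2) * Real.sqrt (a ^ 2 + 1 + x₂ ^ 2))⁻¹) := by
              rw [add_zero, ← ENNReal.ofReal_mul (by positivity),
                ← ENNReal.ofReal_mul (by positivity)]
              congr 1
              ring
      · rw [indicator_of_notMem (show x₂ ∉ {t : ℝ | sR R a ≤ t ^ 2} from hx)]
        have hind : ∀ x₁ : ℝ, (V2 R).indicator (GG R) (x₁, x₂, a) = 0 :=
          fun x₁ => indicator_of_notMem (fun h => hx h.2) _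
        simp only [hind, lintegral_zero, le_refl]
    calc ∫⁻ x₂ : ℝ, ∫⁻ x₁ : ℝ, (V2 R).indicator (GG R) (x₁, x₂, a)
        ≤ ∫⁻ x₂ : ℝ, ({t : ℝ | sR R a ≤ t ^ 2}).indicator (fun t =>
            ENNReal.ofReal (24 * (mR R a)⁻¹) *
            ENNReal.ofReal (((a ^ 2 + 1 + t ^ 2) * Real.sqrt (a ^ 2 + 1 + t ^ 2))⁻¹)) x₂ :=
          lintegral_mono hstep1
      _ = ENNReal.ofReal (24 * (mR R a)⁻¹) *
            ∫⁻ x₂ in {t : ℝ | sR R a ≤ t ^ 2},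
              ENNReal.ofReal (((a ^ 2 + 1 + x₂ ^ 2) * Real.sqrt (a ^ 2 + 1 + x₂ ^ 2))⁻¹) := by
          rw [lintegral_indicator hsetmeas]
          rw [lintegral_const_mul _ (by
            have hmeas : Measurable fun t : ℝ => a ^ 2 + 1 + t ^ 2 :=
              measurable_const.add (measurable_id.pow_const 2)
            exact ((hmeas.mul (Real.continuous_sqrt.measurable.comp hmeas)).inv).ennreal_ofReal)]
      _ ≤ ENNReal.ofReal (24 * (mR R a)⁻¹) * ENNReal.ofReal (3 * (a ^ 2 + 1 + sR R a)⁻¹) := by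
          gcongr
          exact tail32 (by positivity) (sR_nonneg R a)
      _ ≤ ENNReal.ofReal 144 * ENNReal.ofReal ((mR R a * (a ^ 2 + betaR R a))⁻¹) :=
          inner_combine hR ha
  · have hz : ∀ x₂ x₁ : ℝ, (V2 R).indicator (GG R) (x₁, x₂, a) = 0 := by
      intro x₂ x₁
      exact indicator_of_notMem (fun h => ha h.1) _
    calc ∫⁻ x₂ : ℝ, ∫⁻ x₁ : ℝ, (V2 R).indicator (GG R) (x₁, x₂, a)
        = 0 := by simp only [hz, lintegral_zero]
      _ ≤ _ := zero_le

end Stmt11Pieces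





/-- `∫_{r(x) > R} a⁻¹/(r(x) sinh² r(x)) dρ(x) ≲ e^{−R}` for `R ≥ 1`. -/
theorem stmt11 :
    ∃ C : ℝ, 0 < C ∧ ∀ R : ℝ, 1 ≤ R →
      ∫⁻ p in {p : ℝ × ℝ × ℝ | 0 < p.2.2 ∧ R < rD p},
        ENNReal.ofReal ((p.2.2)⁻¹ / (rD p * Real.sinh (rD p) ^ 2)) ∂ρG
        ≤ ENNReal.ofReal (C * Real.exp (-R)) := by
  refine ⟨2000, by norm_num, fun R hR => ?_⟩
  have hchD : Measurable chD := by
    unfold chD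
    fun_prop
  have hrD : Measurable rD := by
    unfold rD
    exact Real.measurable_log.comp (hchD.add
      (Real.continuous_sqrt.measurable.comp ((hchD.pow_const 2).sub measurable_const)))
  have hSmeas : MeasurableSet {p : ℝ × ℝ × ℝ | 0 < p.2.2 ∧ R < rD p} := by
    have hrw : {p : ℝ × ℝ × ℝ | 0 < p.2.2 ∧ R < rD p}
        = {p : ℝ × ℝ × ℝ | 0 < p.2.2} ∩ {p : ℝ × ℝ × ℝ | R < rD p} := rfl
    rw [hrw]
    exact (measurableSet_lt measurable_const meas_a3).inter
      (measurableSet_lt measurable_const hrD)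
  have hW : Measurable fun p : ℝ × ℝ × ℝ => ENNReal.ofReal (p.2.2)⁻¹ :=
    meas_a3.inv.ennreal_ofReal
  have hF : Measurable fun p : ℝ × ℝ × ℝ =>
      ENNReal.ofReal ((p.2.2)⁻¹ / (rD p * Real.sinh (rD p) ^ 2)) :=
    ((meas_a3.inv).div (hrD.mul ((Real.measurable_sinh.comp hrD).pow_const 2))).ennreal_ofReal
  unfold ρG
  rw [setLIntegral_withDensity_eq_setLIntegral_mul _ hW hF hSmeas]
  rw [Measure.restrict_restrict hSmeas]
  rw [inter_eq_self_of_subset_left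
    (show {p : ℝ × ℝ × ℝ | 0 < p.2.2 ∧ R < rD p} ⊆ {p : ℝ × ℝ × ℝ | 0 < p.2.2}
      from fun p hp => hp.1)]
  refine le_trans (setLIntegral_mono (meas_GG R) ?_) ?_
  · intro p hp
    exact pointwise_bd hR hp.1 hp.2
  · refine le_trans (lintegral_mono_set
      (show {p : ℝ × ℝ × ℝ | 0 < p.2.2 ∧ R < rD p} ⊆ V1 R ∪ V2 R from ?_)) ?_
    · intro p hp
      obtain ⟨hp0, hpR⟩ := hp
      have hc1 := chD_ge_one hp0
      obtain ⟨hcosh, -, hr0, -⟩ := rD_facts hp0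
      have hcoshR : Real.cosh R < chD p := by
        rw [← hcosh]
        apply Real.cosh_lt_cosh.2
        rw [abs_of_pos (by linarith : (0:ℝ) < R), abs_of_nonneg hr0]
        exact hpR
      have hceq := chD_eq hp0
      have hkey : 2 * p.2.2 * Real.cosh R - p.2.2 ^ 2 ≤ 1 + p.1 ^ 2 + p.2.1 ^ 2 := by
        rw [hceq, lt_div_iff₀ (by positivity : (0:ℝ) < 2 * p.2.2)] at hcoshR
        nlinarith
      have hb1 : (1:ℝ) ≤ 1 + p.1 ^ 2 + p.2.1 ^ 2 := by
        nlinarith [sq_nonneg p.1, sq_nonneg p.2.1]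
      have hbeta : betaR R p.2.2 ≤ 1 + p.1 ^ 2 + p.2.1 ^ 2 := max_le hb1 hkey
      have hsum : 2 * sR R p.2.2 ≤ p.1 ^ 2 + p.2.1 ^ 2 := by
        unfold sR
        linarith
      rcases le_total (p.1 ^ 2) (p.2.1 ^ 2) with hcase | hcase
      · exact Or.inr ⟨hp0, by linarith⟩
      · exact Or.inl ⟨hp0, by linarith⟩
    · refine le_trans (lintegral_union_le _ _ _) ?_
      refine le_trans (add_le_add (piece1 hR) (piece2 hR)) ?_
      rw [← ENNReal.ofReal_add (by positivity) (by positivity)]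
      apply ENNReal.ofReal_le_ofReal
      nlinarith [Real.exp_pos (-R)]
end
end
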